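/- arXiv:2504.01706 — 10 statements merged into one kernel-verified Lean document; each statement's English description precedes it below -/
import Mathlib

section
/- Let Q be a quiver whose vertex set is equipped with a linear order ≤, and let p = p_1 ∘ p_2 ∘ ⋯ ∘ p_L (with L ≥ 1, p_L traversed first and p_1 last) be a composition of right-minimal directed paths. Then s(p) < t(p), and for every factorization p = u ∘ v with u a nontrivial path, the intermediate vertex s(u) = t(v) satisfies s(u) < t(p). In particular, t(p) is strictly greater than every other vertex that p passes through, so t(p) is the maximum vertex of p and it is attained only at the final vertex. -/
open Quiver

/-- The path `p` passes through the vertex `k`: `p` factors as `v` followed by `u`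
with intermediate vertex `k` (`v`, `u` possibly trivial). -/
def PassesThrough {V : Type*} [Quiver V] {a b : V} (p : Path a b) (k : V) : Prop :=
  ∃ (v : Path a k) (u : Path k b), v.comp u = p

/-- `k` is an inner vertex of `p`: `p` factors as `v` followed by `u`, both nontrivial,
with intermediate vertex `k`. -/
def IsInnerVertex {V : Type*} [Quiver V] {a b : V} (p : Path a b) (k : V) : Prop :=
  ∃ (v : Path a k) (u : Path k b), v.length ≠ 0 ∧ u.length ≠ 0 ∧ v.comp u = p

/-- A nontrivial path `p : i → j` is right-minimal directed if `i < j` and every inner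
vertex `k` of `p` satisfies `k ≤ i`. -/
def IsRMD {V : Type*} [Quiver V] [LinearOrder V] {i j : V} (p : Path i j) : Prop :=
  p.length ≠ 0 ∧ i < j ∧ ∀ k, IsInnerVertex p k → k ≤ i

/-- `p` is a composition of finitely many (at least one) right-minimal directed paths. -/
inductive IsRMDComp {V : Type*} [Quiver V] [LinearOrder V] : ∀ {a b : V}, Path a b → Prop
  | single {a b : V} (p : Path a b) : IsRMD p → IsRMDComp p
  | comp {a b c : V} (p : Path a b) (q : Path b c) :
      IsRMDComp p → IsRMD q → IsRMDComp (p.comp q)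

lemma split_lemma {V : Type*} [Quiver V] {a b c k : V} :
    ∀ (q : Path b c) (p : Path a b) (v : Path a k) (u : Path k c),
      v.comp u = p.comp q →
      (∃ w : Path k b, v.comp w = p ∧ u = w.comp q) ∨
      (∃ w : Path b k, p.comp w = v ∧ w.comp u = q) := by
  intro q
  induction q with
  | nil => intro p v u h
           exact .inl ⟨u, by simpa using h, (Path.comp_nil u).symm⟩
  | cons q' e ih =>
    intro p v u h
    cases u with
    | nil => exact .inr ⟨_, by simpa using h.symm, rfl⟩
    | cons u' e' =>
      rw [Path.comp_cons, Path.comp_cons] at h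
      simp only [Path.cons.injEq] at h
      obtain ⟨rfl, h1, h2⟩ := h
      rcases ih p v u' (eq_of_heq h1) with ⟨w, hw1, hw2⟩ | ⟨w, hw1, hw2⟩
      · exact .inl ⟨w, hw1, by rw [hw2, Path.comp_cons, eq_of_heq h2]⟩
      · exact .inr ⟨w, hw1, by rw [Path.comp_cons, hw2, eq_of_heq h2]⟩

/-- Any intermediate vertex of a factorization of an RMD path with nontrivial second part
is strictly below the target. -/
lemma rmd_mid_lt {V : Type*} [Quiver V] [LinearOrder V] {i j : V} {p : Path i j}
    (hp : IsRMD p) {k : V} (v : Path i k) (u : Path k j) (h : v.comp u = p)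
    (hu : u.length ≠ 0) : k < j := by
  obtain ⟨-, hij, hinner⟩ := hp
  cases v with
  | nil => exact hij
  | cons v' e =>
    exact lt_of_le_of_lt (hinner k ⟨v'.cons e, u, by simp, hu, h⟩) hij

/-- If `p` is a composition of right-minimal directed paths, then `s(p) < t(p)`, every
intermediate vertex of a factorization `p = u ∘ v` with `u` nontrivial is `< t(p)`, and
`t(p)` is the maximum vertex that `p` passes through. -/
theorem stmt_0 {V : Type*} [Quiver V] [LinearOrder V] {a b : V}
    (p : Path a b) (hp : IsRMDComp p) :
    a < b ∧
      (∀ (k : V) (v : Path a k) (u : Path k b), v.comp u = p → u.length ≠ 0 → k < b) ∧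
      (∀ k : V, PassesThrough p k → k ≤ b) := by
  induction hp with
  | single p hRMD =>
    refine ⟨hRMD.2.1, fun k v u h hu => rmd_mid_lt hRMD v u h hu, ?_⟩
    rintro k ⟨v, u, h⟩
    cases u with
    | nil => exact le_refl _
    | cons u' e => exact le_of_lt (rmd_mid_lt hRMD v (u'.cons e) h (by simp))
  | comp p q hpC hqRMD ih =>
    obtain ⟨hab, _, h3⟩ := ih
    have hmid : ∀ (k : V) (v : Path a k) (u : Path k _), v.comp u = p.comp q →
        u.length ≠ 0 → k < _ := fun k v u h hu => by
      rcases split_lemma q p v u h with ⟨w, hw1, hw2⟩ | ⟨w, hw1, hw2⟩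
      · exact lt_of_le_of_lt (h3 k ⟨v, w, hw1⟩) hqRMD.2.1
      · exact rmd_mid_lt hqRMD w u hw2 hu
    refine ⟨lt_trans hab hqRMD.2.1, hmid, ?_⟩
    rintro k ⟨v, u, h⟩
    cases u with
    | nil => exact le_refl _
    | cons u' e => exact le_of_lt (hmid k v (u'.cons e) h (by simp))
end

section
/- Let Q be a quiver whose vertex set is equipped with a linear order ≤. A nontrivial path p in Q can be written as a composition of finitely many right-minimal directed paths if and only if s(p) < t(p) and every inner vertex k of p satisfies k < t(p). -/
/-!
Both sides are conditions on the list `p.vertices.dropLast` of the vertices of `p` other than its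
target: `p` is right-minimal directed iff this list is bounded by `s(p) < t(p)`, and the right-hand
side says that it is bounded strictly by `t(p)`, which is clearly stable under composition.
Conversely, split `p` at the first occurrence of the largest vertex `M` of this list: the part
from `M` to `t(p)` is right-minimal directed, and every vertex of the part up to `M` other than
its target lies strictly below `M`, so induction on the length applies.
-/

open Quiver

namespace Quiver.Path

variable {V : Type*} [Quiver V]

theorem dropLast_vertices_comp {a b c : V} (p : Path a b) (q : Path b c) :
    (p.comp q).vertices.dropLast = p.vertices.dropLast ++ q.vertices.dropLast := by
  rw [vertices_comp, List.dropLast_append_of_ne_nil q.vertices_ne_nil]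

theorem dropLast_vertices_cons {a b c : V} (p : Path a b) (e : b ⟶ c) :
    (p.cons e).vertices.dropLast = p.vertices := by
  simp

theorem exists_eq_comp_and_notMem_dropLast_of_mem_vertices {a b v : V} (p : Path a b)
    (hv : v ∈ p.vertices) :
    ∃ (p₁ : Path a v) (p₂ : Path v b), p = p₁.comp p₂ ∧ v ∉ p₁.vertices.dropLast := by
  induction p with
  | nil =>
    obtain rfl : v = a := by simpa using hv
    exact ⟨nil, nil, rfl, by simp⟩
  | cons p e ih =>
    by_cases h : v ∈ p.vertices
    · obtain ⟨p₁, p₂, rfl, hp₁⟩ := ih h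
      exact ⟨p₁, p₂.cons e, rfl, hp₁⟩
    · obtain rfl : v = _ := ((mem_vertices_cons p e).1 hv).resolve_left h
      exact ⟨p.cons e, nil, rfl, by rwa [dropLast_vertices_cons]⟩

theorem mem_dropLast_vertices_iff {a b k : V} {p : Path a b} (hp : p.length ≠ 0) :
    k ∈ p.vertices.dropLast ↔ k = a ∨ IsInnerVertex p k := by
  obtain ⟨c, p', e, rfl⟩ := (length_ne_zero_iff_eq_cons p).1 hp
  rw [dropLast_vertices_cons]
  constructor
  · intro hk
    obtain ⟨v, u, rfl⟩ := exists_eq_comp_of_mem_vertices p' hk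
    by_cases hv : v.length = 0
    · exact .inl (eq_of_length_zero v hv).symm
    · exact .inr ⟨v, u.cons e, hv, by simp, rfl⟩
  · rintro (rfl | ⟨v, u, -, hu, huv⟩)
    · exact start_mem_vertices p'
    · obtain ⟨d, u', f, rfl⟩ := (length_ne_zero_iff_eq_cons u).1 hu
      rw [← dropLast_vertices_cons p' e, ← huv, dropLast_vertices_comp,
        dropLast_vertices_cons]
      exact List.mem_append_right _ (start_mem_vertices u')

theorem forall_mem_dropLast_vertices_iff {a b : V} {p : Path a b} (hp : p.length ≠ 0)
    {P : V → Prop} :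
    (∀ k ∈ p.vertices.dropLast, P k) ↔ P a ∧ ∀ k, IsInnerVertex p k → P k := by
  simp only [mem_dropLast_vertices_iff hp, or_imp, forall_and, forall_eq]

end Quiver.Path

section RMD

variable {V : Type*} [Quiver V] [LinearOrder V]

theorem isRMD_iff {i j : V} (p : Path i j) :
    IsRMD p ↔ p.length ≠ 0 ∧ i < j ∧ ∀ k ∈ p.vertices.dropLast, k ≤ i := by
  refine and_congr_right fun hp => and_congr_right fun _ => ?_
  rw [Path.forall_mem_dropLast_vertices_iff hp]
  exact (and_iff_right le_rfl).symm

theorem IsRMDComp.lt_of_mem_dropLast_vertices {a b : V} {p : Path a b} (h : IsRMDComp p) :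
    ∀ k ∈ p.vertices.dropLast, k < b := by
  induction h with
  | single q hq =>
    obtain ⟨-, hij, hq⟩ := (isRMD_iff q).1 hq
    exact fun k hk => (hq k hk).trans_lt hij
  | comp p q _ hq ih =>
    obtain ⟨-, hbc, hq⟩ := (isRMD_iff q).1 hq
    intro k hk
    rcases List.mem_append.1 (Path.dropLast_vertices_comp p q ▸ hk) with hk | hk
    · exact (ih k hk).trans hbc
    · exact (hq k hk).trans_lt hbc

theorem isRMDComp_of_forall_mem_dropLast_vertices_lt {a b : V} (p : Path a b)
    (hp : p.length ≠ 0) (h : ∀ k ∈ p.vertices.dropLast, k < b) : IsRMDComp p := by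
  induction hn : p.length using Nat.strong_induction_on generalizing b with
  | _ n ih =>
  obtain ⟨M, hM, hle⟩ : ∃ M ∈ p.vertices.dropLast, ∀ k ∈ p.vertices.dropLast, k ≤ M := by
    obtain ⟨M, hM, hle⟩ := p.vertices.dropLast.toFinset.exists_max_image id
      ⟨a, List.mem_toFinset.2 ((Path.mem_dropLast_vertices_iff hp).2 (.inl rfl))⟩
    exact ⟨M, List.mem_toFinset.1 hM, fun k hk => hle k (List.mem_toFinset.2 hk)⟩
  obtain ⟨v, u, rfl, hv⟩ :=
    Path.exists_eq_comp_and_notMem_dropLast_of_mem_vertices p (List.dropLast_subset _ hM)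
  rw [Path.dropLast_vertices_comp] at hM hle h
  have hMb : M < b := h M hM
  have hu : u.length ≠ 0 := fun hu => hMb.ne (Path.eq_of_length_zero u hu)
  have hu_rmd : IsRMD u :=
    (isRMD_iff u).2 ⟨hu, hMb, fun k hk => hle k (List.mem_append_right _ hk)⟩
  by_cases hv0 : v.length = 0
  · obtain rfl := Path.eq_of_length_zero v hv0
    rw [Path.eq_nil_of_length_zero v hv0, Path.nil_comp]
    exact .single u hu_rmd
  · refine .comp v u (ih v.length ?_ v hv0 (fun k hk => ?_) rfl) hu_rmd
    · rw [← hn, Path.length_comp]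
      omega
    · exact (hle k (List.mem_append_left _ hk)).lt_of_ne (ne_of_mem_of_not_mem hk hv)

end RMD

/-- A nontrivial path `p` can be written as a composition of finitely many right-minimal
directed paths if and only if `s(p) < t(p)` and every inner vertex `k` of `p`
satisfies `k < t(p)`. -/
theorem stmt_1 {V : Type*} [Quiver V] [LinearOrder V] {a b : V}
    (p : Path a b) (hp : p.length ≠ 0) :
    IsRMDComp p ↔ (a < b ∧ ∀ k : V, IsInnerVertex p k → k < b) := by
  rw [← Path.forall_mem_dropLast_vertices_iff hp (P := (· < b))]
  exact ⟨IsRMDComp.lt_of_mem_dropLast_vertices, isRMDComp_of_forall_mem_dropLast_vertices_lt p hp⟩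
end

section
/- Let Q be a quiver whose vertex set is equipped with a linear order ≤, let p be a path in Q, and let m be the maximum of the vertices passed through by p. Suppose m is passed through exactly once, i.e. there is exactly one factorization p = u ∘ v (u, v possibly trivial) with s(u) = t(v) = m. Then p factors uniquely as p = c ∘ b, where b is a path with t(b) = m such that every vertex passed through by b other than its target is strictly less than m, and c is a path with s(c) = m such that every vertex passed through by c other than its source is strictly less than m. -/
open Quiver

/-- Let `m` be the maximum of the vertices passed through by `p`, and suppose `m` is passed
through exactly once.  Then `p` factors uniquely as `p = c ∘ b` (in Lean: `pb.comp pc`)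
where `pb` ends at `m` and all of its vertices other than its target are `< m`, and
`pc` starts at `m` and all of its vertices other than its source are `< m`. -/
theorem stmt_2 {V : Type*} [Quiver V] [LinearOrder V] {a b : V}
    (p : Path a b) (m : V)
    (hm : PassesThrough p m)
    (hmax : ∀ k : V, PassesThrough p k → k ≤ m)
    (honce : ∀ (v v' : Path a m) (u u' : Path m b),
      v.comp u = p → v'.comp u' = p → v = v' ∧ u = u') :
    ∃ (pb : Path a m) (pc : Path m b),
      (pb.comp pc = p ∧
        (∀ (k : V) (v : Path a k) (u : Path k m),
          v.comp u = pb → u.length ≠ 0 → k < m) ∧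
        (∀ (k : V) (v : Path m k) (u : Path k b),
          v.comp u = pc → v.length ≠ 0 → k < m)) ∧
      ∀ (pb' : Path a m) (pc' : Path m b),
        (pb'.comp pc' = p ∧
          (∀ (k : V) (v : Path a k) (u : Path k m),
            v.comp u = pb' → u.length ≠ 0 → k < m) ∧
          (∀ (k : V) (v : Path m k) (u : Path k b),
            v.comp u = pc' → v.length ≠ 0 → k < m)) →
        pb' = pb ∧ pc' = pc := by
  obtain ⟨pb, pc, hpc⟩ := hm
  refine ⟨pb, pc, ⟨hpc, ?_, ?_⟩, ?_⟩
  · intro k v u hvu hlen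
    by_contra h
    push_neg at h
    have hk : k = m := le_antisymm
      (hmax k ⟨v, u.comp pc, by rw [← Path.comp_assoc, hvu, hpc]⟩) h
    subst hk
    have h1 := (honce v pb (u.comp pc) pc
      (by rw [← Path.comp_assoc, hvu, hpc]) hpc).1
    have h2 : v.length + u.length = pb.length := by
      rw [← Path.length_comp, hvu]
    rw [h1] at h2
    omega
  · intro k v u hvu hlen
    by_contra h
    push_neg at h
    have hk : k = m := le_antisymm
      (hmax k ⟨pb.comp v, u, by rw [Path.comp_assoc, hvu, hpc]⟩) h
    subst hk
    have h1 := (honce (pb.comp v) pb u pc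
      (by rw [Path.comp_assoc, hvu, hpc]) hpc).2
    have h2 : v.length + u.length = pc.length := by
      rw [← Path.length_comp, hvu]
    rw [h1] at h2
    omega
  · rintro pb' pc' ⟨h, -, -⟩
    exact honce pb' pb pc' pc h hpc
end

section
/- The sequence of real numbers ((4·C_{n+2} − 4·C_{n+1}) / (2·C_{n+3} − 3·C_{n+2}))_{n ∈ ℕ} converges to 3/5 as n → ∞. -/
open Filter

lemma catalan_pos' (n : ℕ) : 0 < catalan n := by
  rcases Nat.eq_zero_or_pos (catalan n) with h | h
  · have := succ_mul_catalan_eq_centralBinom n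
    rw [h, mul_zero] at this
    exact absurd this.symm (Nat.centralBinom_pos n).ne'
  · exact h

lemma cat_rec (k : ℕ) : ((catalan (k+1) : ℝ)) * (k+2) = 2*(2*k+1) * catalan k := by
  have h1 := succ_mul_catalan_eq_centralBinom (k+1)
  have h2 := succ_mul_catalan_eq_centralBinom k
  have h3 := Nat.succ_mul_centralBinom_succ k
  have key : ((k:ℝ)+1) * (catalan (k+1) * (k+2)) = ((k:ℝ)+1) * (2*(2*k+1) * catalan k) := by
    have h1' : ((k:ℝ)+2) * catalan (k+1) = Nat.centralBinom (k+1) := by exact_mod_cast h1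
    have h2' : ((k:ℝ)+1) * catalan k = Nat.centralBinom k := by exact_mod_cast h2
    have h3' : ((k:ℝ)+1) * Nat.centralBinom (k+1) = 2*(2*(k:ℝ)+1) * Nat.centralBinom k := by
      exact_mod_cast h3
    linear_combination ((k:ℝ)+1)*h1' + h3' - 2*(2*(k:ℝ)+1)*h2'
  have hk : ((k:ℝ)+1) ≠ 0 := by positivity
  exact mul_left_cancel₀ hk key

/-- The proportion `(4·C_{n+2} − 4·C_{n+1}) / (2·C_{n+3} − 3·C_{n+2})` of quasi-hereditary
structures on `kQ(n,1,1)` admitting a regular exact Borel subalgebra tends to `3/5`. -/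
theorem stmt_5 :
    Filter.Tendsto
      (fun n : ℕ =>
        (4 * (catalan (n + 2) : ℝ) - 4 * (catalan (n + 1) : ℝ)) /
          (2 * (catalan (n + 3) : ℝ) - 3 * (catalan (n + 2) : ℝ)))
      Filter.atTop (nhds (3 / 5)) := by
  have heq : ∀ n : ℕ,
      (4 * (catalan (n + 2) : ℝ) - 4 * (catalan (n + 1) : ℝ)) /
          (2 * (catalan (n + 3) : ℝ) - 3 * (catalan (n + 2) : ℝ)) =
        ((12*(n:ℝ)+12)*((n:ℝ)+4)) / ((4*(n:ℝ)+6)*(5*(n:ℝ)+8)) := by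
    intro n
    have hC : (0:ℝ) < catalan (n+1) := by exact_mod_cast catalan_pos' (n+1)
    have h3 : ((n:ℝ)+3) ≠ 0 := by positivity
    have h4 : ((n:ℝ)+4) ≠ 0 := by positivity
    have r1 := cat_rec (n+1)
    have r2 := cat_rec (n+2)
    push_cast at r1 r2
    have e1 : (catalan (n+2) : ℝ) = 2*(2*(n:ℝ)+3)/((n:ℝ)+3) * catalan (n+1) := by
      field_simp
      linarith [r1]
    have e2 : (catalan (n+3) : ℝ) = 2*(2*(n:ℝ)+5)/((n:ℝ)+4) * catalan (n+2) := by
      field_simp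
      linarith [r2]
    rw [e2, e1]
    have hnum : 4 * (2*(2*(n:ℝ)+3)/((n:ℝ)+3) * catalan (n+1)) - 4 * catalan (n+1) =
        (4*(3*(n:ℝ)+3)/((n:ℝ)+3)) * catalan (n+1) := by
      field_simp; ring
    have hden : 2 * (2*(2*(n:ℝ)+5)/((n:ℝ)+4) * (2*(2*(n:ℝ)+3)/((n:ℝ)+3) * catalan (n+1)))
        - 3 * (2*(2*(n:ℝ)+3)/((n:ℝ)+3) * catalan (n+1)) =
        (2*(2*(n:ℝ)+3)*(5*(n:ℝ)+8)/(((n:ℝ)+3)*((n:ℝ)+4))) * catalan (n+1) := by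
      field_simp; ring
    rw [hnum, hden, mul_div_mul_right _ _ hC.ne']
    rw [div_div_div_eq]
    rw [div_eq_div_iff (by positivity) (by positivity)]
    ring
  rw [show (3/5 : ℝ) = ((12+0)*(1+0))/((4+0)*(5+0)) by norm_num]
  refine Filter.Tendsto.congr'
    (f₁ := fun n : ℕ => ((12+12/(n:ℝ))*(1+4/(n:ℝ)))/((4+6/(n:ℝ))*(5+8/(n:ℝ)))) ?_ ?_
  · filter_upwards [eventually_gt_atTop 0] with n hn
    have hn' : (n:ℝ) ≠ 0 := by positivity
    rw [heq n]
    field_simp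
  · apply Tendsto.div
    · exact (tendsto_const_nhds.add (tendsto_const_div_atTop_nhds_zero_nat 12)).mul
        (tendsto_const_nhds.add (tendsto_const_div_atTop_nhds_zero_nat 4))
    · exact (tendsto_const_nhds.add (tendsto_const_div_atTop_nhds_zero_nat 6)).mul
        (tendsto_const_nhds.add (tendsto_const_div_atTop_nhds_zero_nat 8))
    · norm_num
end

section
/- The sequence of real numbers ((2·C_{n+2} + C_{n+1}) / (3·C_{n+2} − C_{n+1}))_{n ∈ ℕ} converges to 9/11 as n → ∞. -/
lemma catalan_key (n : ℕ) :
    (n + 3) * catalan (n + 2) = 2 * (2 * n + 3) * catalan (n + 1) := by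
  have h1 := succ_mul_catalan_eq_centralBinom (n + 1)
  have h2 := succ_mul_catalan_eq_centralBinom (n + 2)
  have h3 := Nat.succ_mul_centralBinom_succ (n + 1)
  have h4 : (n + 2) * ((n + 3) * catalan (n + 2)) =
      (n + 2) * (2 * (2 * n + 3) * catalan (n + 1)) := by
    calc (n + 2) * ((n + 3) * catalan (n + 2))
        = (n + 2) * ((n + 2 + 1) * catalan (n + 2)) := by ring_nf
      _ = (n + 1 + 1) * Nat.centralBinom (n + 1 + 1) := by rw [h2]
      _ = 2 * (2 * (n + 1) + 1) * Nat.centralBinom (n + 1) := h3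
      _ = 2 * (2 * n + 3) * ((n + 1 + 1) * catalan (n + 1)) := by rw [h1]; ring_nf
      _ = (n + 2) * (2 * (2 * n + 3) * catalan (n + 1)) := by ring
  exact Nat.eq_of_mul_eq_mul_left (by omega) h4

lemma catalan_key_real (n : ℕ) :
    ((n : ℝ) + 3) * (catalan (n + 2) : ℝ) = 2 * (2 * n + 3) * (catalan (n + 1) : ℝ) := by
  exact_mod_cast congrArg (fun k : ℕ => (k : ℝ)) (catalan_key n)

lemma ratio_eq (n : ℕ) :
    (2 * (catalan (n + 2) : ℝ) + (catalan (n + 1) : ℝ)) /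
        (3 * (catalan (n + 2) : ℝ) - (catalan (n + 1) : ℝ)) =
      (9 * (n : ℝ) + 15) / (11 * (n : ℝ) + 15) := by
  set C1 : ℝ := (catalan (n + 1) : ℝ) with hC1
  set C2 : ℝ := (catalan (n + 2) : ℝ) with hC2
  have key : ((n : ℝ) + 3) * C2 = 2 * (2 * n + 3) * C1 := catalan_key_real n
  have hC1pos : 0 < C1 := by
    have h := succ_mul_catalan_eq_centralBinom (n + 1)
    have hb := Nat.centralBinom_pos (n + 1)
    have : 0 < catalan (n + 1) := by
      rcases Nat.eq_zero_or_pos (catalan (n + 1)) with h0 | h0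
      · rw [h0, mul_zero] at h; omega
      · exact h0
    rw [hC1]
    exact_mod_cast this
  have hn : (0 : ℝ) ≤ n := Nat.cast_nonneg n
  have hden2 : (0 : ℝ) < 11 * (n : ℝ) + 15 := by linarith
  have hden1 : 0 < 3 * C2 - C1 := by nlinarith
  rw [div_eq_div_iff (ne_of_gt hden1) (ne_of_gt hden2)]
  nlinarith [key]

/-- The proportion `(2·C_{n+2} + C_{n+1}) / (3·C_{n+2} − C_{n+1})` of quasi-hereditary
structures on `kQ(1,n,1)` admitting a regular exact Borel subalgebra tends to `9/11`. -/
theorem stmt_7 :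
    Filter.Tendsto
      (fun n : ℕ =>
        (2 * (catalan (n + 2) : ℝ) + (catalan (n + 1) : ℝ)) /
          (3 * (catalan (n + 2) : ℝ) - (catalan (n + 1) : ℝ)))
      Filter.atTop (nhds (9 / 11)) := by
  have h0 : Filter.Tendsto (fun n : ℕ => (1 : ℝ) / n) Filter.atTop (nhds 0) :=
    tendsto_one_div_atTop_nhds_zero_nat
  have hnum : Filter.Tendsto (fun n : ℕ => (9 : ℝ) + 15 * (1 / n)) Filter.atTop (nhds 9) := by
    have := (h0.const_mul 15).const_add (9 : ℝ)
    simpa using this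
  have hden : Filter.Tendsto (fun n : ℕ => (11 : ℝ) + 15 * (1 / n)) Filter.atTop (nhds 11) := by
    have := (h0.const_mul 15).const_add (11 : ℝ)
    simpa using this
  have hdiv : Filter.Tendsto
      (fun n : ℕ => ((9 : ℝ) + 15 * (1 / n)) / (11 + 15 * (1 / n)))
      Filter.atTop (nhds (9 / 11)) := hnum.div hden (by norm_num)
  refine hdiv.congr' ?_
  filter_upwards [Filter.eventually_gt_atTop 0] with n hn
  have hnR : (0 : ℝ) < n := by exact_mod_cast hn
  rw [ratio_eq n]
  field_simp
end

section
/- The sequence of real numbers ((C_{n+2} + 3·C_n) / (3·C_{n+2} − C_{n+1}))_{n ∈ ℕ} converges to 19/44 as n → ∞. -/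
open Filter

lemma catalan_ratio_nat (n : ℕ) :
    (n + 2) * catalan (n + 1) = 2 * (2 * n + 1) * catalan n := by
  have h1 := succ_mul_catalan_eq_centralBinom (n + 1)
  have h2 := succ_mul_catalan_eq_centralBinom n
  have h3 := Nat.succ_mul_centralBinom_succ n
  have key : (n + 1) * ((n + 2) * catalan (n + 1)) =
      (n + 1) * (2 * (2 * n + 1) * catalan n) := by
    calc (n + 1) * ((n + 2) * catalan (n + 1))
        = (n + 1) * Nat.centralBinom (n + 1) := by rw [h1]
      _ = 2 * (2 * n + 1) * Nat.centralBinom n := h3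
      _ = 2 * (2 * n + 1) * ((n + 1) * catalan n) := by rw [h2]
      _ = (n + 1) * (2 * (2 * n + 1) * catalan n) := by ring
  exact Nat.eq_of_mul_eq_mul_left (Nat.succ_pos n) key

lemma catalan_ratio_real (n : ℕ) :
    (catalan (n + 1) : ℝ) = (2 * (2 * n + 1) / (n + 2)) * catalan n := by
  have h : ((n : ℝ) + 2) * catalan (n + 1) = 2 * (2 * n + 1) * catalan n := by
    exact_mod_cast congrArg (Nat.cast : ℕ → ℝ) (catalan_ratio_nat n)
  have hn2 : (n : ℝ) + 2 ≠ 0 := by positivity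
  field_simp
  linarith [h]

noncomputable def g (n : ℕ) : ℝ := 2 * (2 * n + 1) / (n + 2)

lemma g_tendsto : Tendsto g atTop (nhds 4) := by
  have hden : Tendsto (fun n : ℕ => (n : ℝ) + 2) atTop atTop :=
    tendsto_atTop_add_const_right atTop 2 tendsto_natCast_atTop_atTop
  have h0 : Tendsto (fun n : ℕ => (6 : ℝ) / ((n : ℝ) + 2)) atTop (nhds 0) :=
    Tendsto.div_atTop tendsto_const_nhds hden
  have heq : ∀ n : ℕ, g n = 4 - 6 / ((n : ℝ) + 2) := by
    intro n
    have hn2 : (n : ℝ) + 2 ≠ 0 := by positivity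
    unfold g
    field_simp
    ring
  have : Tendsto (fun n : ℕ => 4 - 6 / ((n : ℝ) + 2)) atTop (nhds (4 - 0)) :=
    tendsto_const_nhds.sub h0
  have h := this.congr (fun n => (heq n).symm)
  simpa using h

/-- The proportion `(C_{n+2} + 3·C_n) / (3·C_{n+2} − C_{n+1})` of quasi-hereditary
structures on `kQ(1,n,1)ᵒᵖ` admitting a regular exact Borel subalgebra tends to `19/44`. -/
theorem stmt_8 :
    Filter.Tendsto
      (fun n : ℕ =>
        ((catalan (n + 2) : ℝ) + 3 * (catalan n : ℝ)) /
          (3 * (catalan (n + 2) : ℝ) - (catalan (n + 1) : ℝ)))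
      Filter.atTop (nhds (19 / 44)) := by
  have hcat0 : ∀ n : ℕ, (0 : ℝ) < catalan n := fun n => by
    exact_mod_cast catalan_pos' n
  have heq : ∀ n : ℕ,
      ((catalan (n + 2) : ℝ) + 3 * (catalan n : ℝ)) /
          (3 * (catalan (n + 2) : ℝ) - (catalan (n + 1) : ℝ)) =
        (g n * g (n + 1) + 3) / (3 * (g n * g (n + 1)) - g n) := by
    intro n
    have h1 : (catalan (n + 1) : ℝ) = g n * catalan n := catalan_ratio_real n
    have h2 : (catalan (n + 2) : ℝ) = g (n + 1) * catalan (n + 1) :=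
      catalan_ratio_real (n + 1)
    have hc : (catalan n : ℝ) ≠ 0 := (hcat0 n).ne'
    rw [h2, h1]
    rw [show g (n + 1) * (g n * (catalan n : ℝ)) + 3 * (catalan n : ℝ)
        = (g n * g (n + 1) + 3) * (catalan n : ℝ) by ring,
      show 3 * (g (n + 1) * (g n * (catalan n : ℝ))) - g n * (catalan n : ℝ)
        = (3 * (g n * g (n + 1)) - g n) * (catalan n : ℝ) by ring,
      mul_div_mul_right _ _ hc]
  have hg : Tendsto g atTop (nhds 4) := g_tendsto
  have hg1 : Tendsto (fun n : ℕ => g (n + 1)) atTop (nhds 4) :=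
    hg.comp (tendsto_add_atTop_nat 1)
  have hnum : Tendsto (fun n : ℕ => g n * g (n + 1) + 3) atTop (nhds 19) := by
    have := (hg.mul hg1).add (tendsto_const_nhds (x := (3 : ℝ)))
    norm_num at this
    exact this
  have hden : Tendsto (fun n : ℕ => 3 * (g n * g (n + 1)) - g n) atTop
      (nhds 44) := by
    have := ((tendsto_const_nhds (x := (3 : ℝ))).mul (hg.mul hg1)).sub hg
    norm_num at this
    exact this
  have : Tendsto (fun n : ℕ => (g n * g (n + 1) + 3) / (3 * (g n * g (n + 1)) - g n))
      atTop (nhds (19 / 44)) := hnum.div hden (by norm_num)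
  exact (this.congr (fun n => (heq n).symm))
end

section
/- Let Q be a quiver with a linear order ≤ on its vertices such that Conditions (1) and (2) hold for (Q, ≤), and let Q' be a subquiver of Q (i.e. a quiver whose vertex set is a subset of that of Q and whose arrows form a subset of the arrows of Q between those vertices), equipped with the restricted order. Then Conditions (1) and (2) hold for (Q', ≤). -/
open Quiver

/-- Condition (1): for all paths `p : i → k` and `q : j → k` with `i < k < j` such that
every vertex passed through by `p` is `≤ k`, there is a path `r : j → i` with `q = p ∘ r`. -/
def Cond1 (V : Type*) [Quiver V] [LinearOrder V] : Prop :=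
  ∀ (i k j : V) (p : Path i k) (q : Path j k),
    i < k → k < j → (∀ m, PassesThrough p m → m ≤ k) →
    ∃ r : Path j i, r.comp p = q

/-- Condition (2): for every path `q : j → i` with `i < j`, there is at most one
right-minimal directed path `p` with source `i` and target `< j`. -/
def Cond2 (V : Type*) [Quiver V] [LinearOrder V] : Prop :=
  ∀ i j : V, i < j → Nonempty (Path j i) →
    ∀ (k k' : V) (p : Path i k) (p' : Path i k'),
      IsRMD p → IsRMD p' → k < j → k' < j → k = k' ∧ HEq p p' 

/-- A subquiver of `Q` determined by a vertex subset `S` and a predicate `A` selecting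
arrows of `Q` between vertices of `S`. -/
def subquiverQuiver {V : Type*} [Quiver V] (S : Set V)
    (A : ∀ u v : V, (u ⟶ v) → Prop) : Quiver S :=
  ⟨fun u v => { f : (u : V) ⟶ (v : V) // A u v f }⟩

section Aux

variable {W : Type*} {V : Type*} [Quiver W] [Quiver V] (F : W ⥤q V)

lemma length_mapPath : ∀ {a b : W} (p : Path a b), (F.mapPath p).length = p.length
  | _, _, .nil => rfl
  | _, _, .cons p _ => by simp [length_mapPath p]

lemma lift_decomp' :
    ∀ {m n : V} (u : Path m n) {a b : W} (q : Path a b) (hn : n = F.obj b)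
      (r : Path (F.obj a) m), HEq (r.comp u) (F.mapPath q) →
      ∃ (w : W) (_ : F.obj w = m) (r' : Path a w) (u' : Path w b),
        r'.comp u' = q ∧ HEq (F.mapPath r') r ∧ HEq (F.mapPath u') u := by
  intro m n u
  induction u with
  | nil =>
    intro a b q hn r h
    subst hn
    have h'' : r = F.mapPath q := by simpa using eq_of_heq h
    exact ⟨b, rfl, q, .nil, by simp, heq_of_eq h''.symm, HEq.rfl⟩
  | @cons c n u₀ e ih =>
    intro a b q hn r h
    subst hn
    have h' : (r.comp u₀).cons e = F.mapPath q := by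
      rw [← Path.comp_cons]; exact eq_of_heq h
    cases q with
    | nil => exact absurd (congrArg Path.length h') (by simp)
    | @cons d _ q₀ f =>
      rw [Prefunctor.mapPath_cons] at h'
      injection h' with h1 h2 h3 h4
      subst h1
      obtain ⟨w, hw, r', u', hc, hr, hu⟩ := ih q₀ rfl r h3
      subst hw
      refine ⟨w, rfl, r', u'.cons f, by rw [Path.comp_cons, hc], hr, heq_of_eq ?_⟩
      rw [Prefunctor.mapPath_cons, eq_of_heq hu, eq_of_heq h4]


lemma lift_decomp {a b : W} (q : Path a b) {m : V} (r : Path (F.obj a) m)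
    (u : Path m (F.obj b)) (h : r.comp u = F.mapPath q) :
    ∃ (w : W) (_ : F.obj w = m) (r' : Path a w) (u' : Path w b),
      r'.comp u' = q ∧ HEq (F.mapPath r') r ∧ HEq (F.mapPath u') u :=
  lift_decomp' F u q rfl r (heq_of_eq h)

lemma mapPath_inj (hobj : Function.Injective F.obj)
    (hmap : ∀ {a b : W}, Function.Injective (fun f : a ⟶ b => F.map f)) :
    ∀ {a b : W} (p q : Path a b), F.mapPath p = F.mapPath q → p = q := by
  intro a b p
  induction p with
  | nil =>
    intro q h
    cases q with
    | nil => rfl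
    | cons q₀ f => exact absurd (congrArg Path.length h) (by simp [length_mapPath])
  | cons p₀ f ih =>
    intro q h
    cases q with
    | nil => exact absurd (congrArg Path.length h) (by simp [length_mapPath])
    | @cons d _ q₀ g =>
      rw [Prefunctor.mapPath_cons, Prefunctor.mapPath_cons] at h
      injection h with h1 h2 h3 h4
      obtain rfl := hobj h1
      rw [ih q₀ (eq_of_heq h3), hmap (eq_of_heq h4)]

lemma lift_passes {a b : W} (q : Path a b) {m : V}
    (h : PassesThrough (F.mapPath q) m) : ∃ w : W, F.obj w = m ∧ PassesThrough q w := by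
  obtain ⟨v, u, hc⟩ := h
  obtain ⟨w, hw, r', u', hc', _, _⟩ := lift_decomp F q v u hc
  exact ⟨w, hw, r', u', hc'⟩

lemma lift_inner {a b : W} (q : Path a b) {m : V}
    (h : IsInnerVertex (F.mapPath q) m) : ∃ w : W, F.obj w = m ∧ IsInnerVertex q w := by
  obtain ⟨v, u, hv, hu, hc⟩ := h
  obtain ⟨w, hw, r', u', hc', hr, hu'⟩ := lift_decomp F q v u hc
  subst hw
  refine ⟨w, rfl, r', u', ?_, ?_, hc'⟩
  · rw [← length_mapPath F r', eq_of_heq hr]; exact hv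
  · rw [← length_mapPath F u', eq_of_heq hu']; exact hu

end Aux

/-- If Conditions (1) and (2) hold for `(Q, ≤)`, then they hold for any subquiver of `Q`
equipped with the restricted order. -/


theorem stmt_11 {V : Type*} [Quiver V] [LinearOrder V]
    (S : Set V) (A : ∀ u v : V, (u ⟶ v) → Prop)
    (h1 : Cond1 V) (h2 : Cond2 V) :
    (@Cond1 S (subquiverQuiver S A) inferInstance) ∧
      (@Cond2 S (subquiverQuiver S A) inferInstance) := by
  letI : Quiver S := subquiverQuiver S A
  let F : S ⥤q V := ⟨Subtype.val, fun f => f.val⟩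
  have hobj : Function.Injective F.obj := Subtype.val_injective
  have hmap : ∀ {a b : S}, Function.Injective (fun f : a ⟶ b => F.map f) :=
    fun {a b} f g h => Subtype.ext h
  constructor
  · intro i k j p q hik hkj hpass
    obtain ⟨r, hr⟩ := h1 i.val k.val j.val (F.mapPath p) (F.mapPath q)
      (Subtype.coe_lt_coe.mpr hik) (Subtype.coe_lt_coe.mpr hkj)
      (fun m hm => by
        obtain ⟨w, rfl, hw⟩ := lift_passes F p hm
        exact Subtype.coe_le_coe.mpr (hpass w hw))
    obtain ⟨w, hw, r', u', hc, hr', hu'⟩ := lift_decomp F q r (F.mapPath p) hr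
    obtain rfl := hobj hw
    have : u' = p := mapPath_inj F hobj (fun {a b} => hmap (a:=a) (b:=b)) u' p (eq_of_heq hu')
    subst this
    exact ⟨r', hc⟩
  · intro i j hij hne k k' p p' hp hp' hkj hk'j
    have hne' : Nonempty (Path (j : V) (i : V)) := hne.map (F.mapPath ·)
    have rmd : ∀ {l : S} (t : Path i l), IsRMD t → IsRMD (F.mapPath t) := by
      intro l t ht
      refine ⟨by rw [length_mapPath]; exact ht.1, Subtype.coe_lt_coe.mpr ht.2.1, ?_⟩
      intro m hm
      obtain ⟨w, rfl, hw⟩ := lift_inner F t hm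
      exact Subtype.coe_le_coe.mpr (ht.2.2 w hw)
    obtain ⟨hkk, hpp⟩ := h2 i.val j.val (Subtype.coe_lt_coe.mpr hij) hne'
      k.val k'.val (F.mapPath p) (F.mapPath p') (rmd p hp) (rmd p' hp')
      (Subtype.coe_lt_coe.mpr hkj) (Subtype.coe_lt_coe.mpr hk'j)
    obtain rfl : k = k' := Subtype.ext hkk
    exact ⟨rfl, heq_of_eq (mapPath_inj F hobj (fun {a b} => hmap (a:=a) (b:=b)) p p' (eq_of_heq hpp))⟩
end

section
/- Let n_a, n_b, n_c ≥ 0. For every linear order ≤ on the vertex set of Q(n_a, n_b, n_c), Condition (1) holds for (Q(n_a, n_b, n_c), ≤); that is, for all paths p: i → k and q: j → k with i < k < j such that every vertex passed through by p is ≤ k, there exists a path r: j → i with q = p ∘ r. -/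
/-- The vertex set of the quiver `Q(n_a, n_b, n_c)`: vertices `a 0, …, a n_a`,
`b 0, …, b (n_b - 1)` (representing `b_1, …, b_{n_b}`) and
`c 0, …, c (n_c - 1)` (representing `c_1, …, c_{n_c}`). -/
inductive QV (na nb nc : ℕ) : Type where
  | a : Fin (na + 1) → QV na nb nc
  | b : Fin nb → QV na nb nc
  | c : Fin nc → QV na nb nc

/-- The arrow relation of `Q(n_a, n_b, n_c)`: arrows `a_i → a_{i-1}`, `a_0 → b_1`,
`b_i → b_{i+1}`, `a_0 → c_1`, `c_i → c_{i+1}`. -/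
def qrel {na nb nc : ℕ} : QV na nb nc → QV na nb nc → Prop
  | .a i, .a j => (i : ℕ) = (j : ℕ) + 1
  | .a i, .b j => (i : ℕ) = 0 ∧ (j : ℕ) = 0
  | .a i, .c j => (i : ℕ) = 0 ∧ (j : ℕ) = 0
  | .b i, .b j => (j : ℕ) = (i : ℕ) + 1
  | .c i, .c j => (j : ℕ) = (i : ℕ) + 1
  | _, _ => False

/-- The quiver `Q(n_a, n_b, n_c)`. -/
instance {na nb nc : ℕ} : Quiver (QV na nb nc) :=
  ⟨fun u v => PLift (qrel u v)⟩

open Quiver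

/-
In `Q(n_a, n_b, n_c)` every vertex has at most one incoming arrow. Hence two paths with a
common target are comparable: one is a final segment of the other. Given `p : i → k` and
`q : j → k`, if `p` were a final segment of `q` then `p` would pass through `j > k`, so `q`
is a final segment of `p`, which is Condition (1).
-/

namespace Quiver.Path

variable {V : Type*} [Quiver V]

theorem exists_comp_eq_or_exists_comp_eq (hV : ∀ k : V, Subsingleton (Σ x, x ⟶ k))
    {u k : V} (p : Path u k) {v : V} (q : Path v k) :
    (∃ r : Path v u, r.comp p = q) ∨ ∃ s : Path u v, s.comp q = p := by
  induction p generalizing v with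
  | nil => exact Or.inl ⟨q, rfl⟩
  | @cons w k p f ih =>
    cases q with
    | nil => exact Or.inr ⟨p.cons f, rfl⟩
    | @cons w' _ q e =>
      obtain ⟨rfl, he⟩ := Sigma.mk.inj_iff.mp ((hV k).elim ⟨w', e⟩ ⟨w, f⟩)
      cases eq_of_heq he
      rcases ih q with ⟨r, rfl⟩ | ⟨s, rfl⟩
      · exact Or.inl ⟨r, rfl⟩
      · exact Or.inr ⟨s, rfl⟩

end Quiver.Path

theorem cond1_of_subsingleton_incoming {V : Type*} [Quiver V] [LinearOrder V]
    (hV : ∀ k : V, Subsingleton (Σ x, x ⟶ k)) : Cond1 V := by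
  intro i k j p q _ hkj hp
  refine (Path.exists_comp_eq_or_exists_comp_eq hV p q).resolve_right ?_
  rintro ⟨s, hs⟩
  exact (hp j ⟨s, q, hs⟩).not_gt hkj

theorem qrel_left_unique {na nb nc : ℕ} {x y k : QV na nb nc} (hx : qrel x k) (hy : qrel y k) :
    x = y := by
  cases x <;> cases y <;> cases k <;> simp_all [qrel, Fin.ext_iff, -Fin.val_eq_zero_iff]

theorem QV.subsingleton_incoming {na nb nc : ℕ} (k : QV na nb nc) :
    Subsingleton (Σ x, x ⟶ k) :=
  ⟨fun ⟨x, ⟨hx⟩⟩ ⟨y, ⟨hy⟩⟩ => by cases qrel_left_unique hx hy; rfl⟩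

/-- Condition (1) holds for `Q(n_a, n_b, n_c)` with any linear order on its vertices. -/
theorem stmt_12 (na nb nc : ℕ) [LinearOrder (QV na nb nc)] :
    Cond1 (QV na nb nc) :=
  cond1_of_subsingleton_incoming QV.subsingleton_incoming
end

section
/- Let Q be a quiver whose underlying graph is the Dynkin diagram A_n, i.e. its vertices are v_1, …, v_n, for each 1 ≤ i < n there is exactly one arrow between v_i and v_{i+1} (oriented in one of the two possible directions), and there are no other arrows. Then for every linear order ≤ on the vertices of Q, Condition (2) holds for (Q, ≤). -/
open Quiver

section AuxAn

variable {V : Type*} [Quiver V] {n : ℕ}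

/-- There is an arrow between the vertices of indices `a` and `b`. -/
def idxA (v : Fin n ≃ V) (a b : ℕ) : Prop :=
  ∃ (ha : a < n) (hb : b < n), Nonempty (v ⟨a, ha⟩ ⟶ v ⟨b, hb⟩)

/-- Index of a vertex. -/
def fidx (v : Fin n ≃ V) (x : V) : ℕ := (v.symm x : ℕ)

variable (v : Fin n ≃ V)

lemma fidx_inj {a b : V} (h : fidx v a = fidx v b) : a = b :=
  v.symm.injective (Fin.ext h)

lemma arrowA {x y : V} (e : x ⟶ y) : idxA v (fidx v x) (fidx v y) := by
  refine ⟨(v.symm x).2, (v.symm y).2, ⟨?_⟩⟩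
  show v (v.symm x) ⟶ v (v.symm y)
  rw [Equiv.apply_symm_apply, Equiv.apply_symm_apply]
  exact e

lemma exclA (hconsec : ∀ i j : Fin n, (i : ℕ) + 1 = (j : ℕ) →
      Subsingleton (v i ⟶ v j) ∧ Subsingleton (v j ⟶ v i) ∧
        (Nonempty (v i ⟶ v j) ↔ IsEmpty (v j ⟶ v i)))
    {a : ℕ} (h1 : idxA v a (a + 1)) (h2 : idxA v (a + 1) a) : False := by
  obtain ⟨ha, hb, ⟨e⟩⟩ := h1
  obtain ⟨ha', hb', ⟨e'⟩⟩ := h2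
  exact ((hconsec ⟨a, ha⟩ ⟨a + 1, hb⟩ rfl).2.2.mp ⟨e⟩).false e'

lemma arrowStep (hother : ∀ i j : Fin n, (i : ℕ) + 1 ≠ (j : ℕ) → (j : ℕ) + 1 ≠ (i : ℕ) →
      IsEmpty (v i ⟶ v j)) {x y : V} (e : x ⟶ y) :
    fidx v y = fidx v x + 1 ∨ fidx v x = fidx v y + 1 := by
  by_contra h
  push_neg at h
  refine (hother (v.symm x) (v.symm y) (fun hh => h.1 hh.symm) (fun hh => h.2 hh.symm)).false ?_
  show v (v.symm x) ⟶ v (v.symm y)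
  rw [Equiv.apply_symm_apply, Equiv.apply_symm_apply]
  exact e

lemma homSubsing (hconsec : ∀ i j : Fin n, (i : ℕ) + 1 = (j : ℕ) →
      Subsingleton (v i ⟶ v j) ∧ Subsingleton (v j ⟶ v i) ∧
        (Nonempty (v i ⟶ v j) ↔ IsEmpty (v j ⟶ v i)))
    {x y : V} (h : fidx v y = fidx v x + 1 ∨ fidx v x = fidx v y + 1)
    (e e' : x ⟶ y) : e = e' := by
  rcases h with h | h
  · have hs := (hconsec (v.symm x) (v.symm y) h.symm).1
    rw [Equiv.apply_symm_apply, Equiv.apply_symm_apply] at hs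
    exact hs.allEq e e'
  · have hs := (hconsec (v.symm y) (v.symm x) h.symm).2.1
    rw [Equiv.apply_symm_apply, Equiv.apply_symm_apply] at hs
    exact hs.allEq e e'

lemma dirA (hconsec : ∀ i j : Fin n, (i : ℕ) + 1 = (j : ℕ) →
      Subsingleton (v i ⟶ v j) ∧ Subsingleton (v j ⟶ v i) ∧
        (Nonempty (v i ⟶ v j) ↔ IsEmpty (v j ⟶ v i)))
    (hother : ∀ i j : Fin n, (i : ℕ) + 1 ≠ (j : ℕ) → (j : ℕ) + 1 ≠ (i : ℕ) →
      IsEmpty (v i ⟶ v j)) :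
    ∀ {x y : V} (p : Path x y), p.length ≠ 0 →
      (fidx v y = fidx v x + p.length ∧
        ∀ m, fidx v x ≤ m → m < fidx v y → idxA v m (m + 1)) ∨
      (fidx v x = fidx v y + p.length ∧
        ∀ m, fidx v y ≤ m → m < fidx v x → idxA v (m + 1) m) := by
  intro x y p
  induction p with
  | nil => simp
  | @cons w z p₁ e ih =>
    intro _
    have hlen : (p₁.cons e).length = p₁.length + 1 := rfl
    by_cases h0 : p₁.length = 0
    · have hxw : x = w := Quiver.Path.eq_of_length_zero p₁ h0
      subst hxw
      rcases arrowStep v hother e with h | h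
      · left
        refine ⟨by omega, ?_⟩
        intro m h1 h2
        have hm : m = fidx v x := by omega
        subst hm
        rw [← h]
        exact arrowA v e
      · right
        refine ⟨by omega, ?_⟩
        intro m h1 h2
        have hm : m = fidx v z := by omega
        subst hm
        rw [← h]
        exact arrowA v e
    · rcases ih h0 with ⟨hb, harr⟩ | ⟨hb, harr⟩
      · rcases arrowStep v hother e with h | h
        · left
          refine ⟨by omega, ?_⟩
          intro m h1 h2
          by_cases hm : m < fidx v w
          · exact harr m h1 hm
          · have hm' : m = fidx v w := by omega
            subst hm'
            rw [← h]
            exact arrowA v e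
        · exfalso
          have h1 : idxA v (fidx v z) (fidx v z + 1) := by
            have := harr (fidx v z) (by omega) (by omega)
            rwa [show fidx v z + 1 = fidx v w from by omega] at this ⊢
          have h2 : idxA v (fidx v z + 1) (fidx v z) := by
            have := arrowA v e
            rwa [show fidx v w = fidx v z + 1 from by omega] at this
          exact exclA v hconsec h1 h2
      · rcases arrowStep v hother e with h | h
        · exfalso
          have h1 : idxA v (fidx v w) (fidx v w + 1) := by
            rw [← h]
            exact arrowA v e
          have h2 : idxA v (fidx v w + 1) (fidx v w) :=
            harr (fidx v w) (by omega) (by omega)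
          exact exclA v hconsec h1 h2
        · right
          refine ⟨by omega, ?_⟩
          intro m h1 h2
          by_cases hm : fidx v w ≤ m
          · exact harr m hm h2
          · have hm' : m = fidx v z := by omega
            subst hm'
            rw [show fidx v z + 1 = fidx v w from by omega]
            exact arrowA v e

lemma lastArrow (hconsec : ∀ i j : Fin n, (i : ℕ) + 1 = (j : ℕ) →
      Subsingleton (v i ⟶ v j) ∧ Subsingleton (v j ⟶ v i) ∧
        (Nonempty (v i ⟶ v j) ↔ IsEmpty (v j ⟶ v i)))
    (hother : ∀ i j : Fin n, (i : ℕ) + 1 ≠ (j : ℕ) → (j : ℕ) + 1 ≠ (i : ℕ) →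
      IsEmpty (v i ⟶ v j))
    {x w y : V} (p₁ : Path x w) (e : w ⟶ y) :
    (fidx v y = fidx v x + p₁.length + 1 → fidx v y = fidx v w + 1) ∧
    (fidx v x = fidx v y + p₁.length + 1 → fidx v w = fidx v y + 1) := by
  have hstep := arrowStep v hother e
  by_cases h0 : p₁.length = 0
  · have hxw : x = w := Quiver.Path.eq_of_length_zero p₁ h0
    subst hxw
    constructor <;> intro h <;> omega
  · rcases dirA v hconsec hother p₁ h0 with ⟨h, _⟩ | ⟨h, _⟩ <;>
      constructor <;> intro hh <;> omega

lemma uniqA (hconsec : ∀ i j : Fin n, (i : ℕ) + 1 = (j : ℕ) →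
      Subsingleton (v i ⟶ v j) ∧ Subsingleton (v j ⟶ v i) ∧
        (Nonempty (v i ⟶ v j) ↔ IsEmpty (v j ⟶ v i)))
    (hother : ∀ i j : Fin n, (i : ℕ) + 1 ≠ (j : ℕ) → (j : ℕ) + 1 ≠ (i : ℕ) →
      IsEmpty (v i ⟶ v j)) :
    ∀ {x y : V} (p q : Path x y), p = q := by
  intro x y p
  induction p with
  | nil =>
    intro q
    cases q with
    | nil => rfl
    | cons q₁ e' =>
      exfalso
      have hlen : (q₁.cons e').length = q₁.length + 1 := rfl
      rcases dirA v hconsec hother (q₁.cons e') (by simp) with ⟨h, _⟩ | ⟨h, _⟩ <;> omega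
  | @cons w z p₁ e ih =>
    intro q
    cases q with
    | nil =>
      exfalso
      have hlen : (p₁.cons e).length = p₁.length + 1 := rfl
      rcases dirA v hconsec hother (p₁.cons e) (by simp) with ⟨h, _⟩ | ⟨h, _⟩ <;> omega
    | @cons w' z' q₁ e' =>
      have hl1 : (p₁.cons e).length = p₁.length + 1 := rfl
      have hl2 : (q₁.cons e').length = q₁.length + 1 := rfl
      have lap := lastArrow v hconsec hother p₁ e
      have laq := lastArrow v hconsec hother q₁ e'
      have hww : fidx v w = fidx v w' := by
        rcases dirA v hconsec hother (p₁.cons e) (by simp) with ⟨h, _⟩ | ⟨h, _⟩ <;>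
          rcases dirA v hconsec hother (q₁.cons e') (by simp) with ⟨h', _⟩ | ⟨h', _⟩
        · have t1 := lap.1 (by omega); have t2 := laq.1 (by omega); omega
        · omega
        · omega
        · have t1 := lap.2 (by omega); have t2 := laq.2 (by omega); omega
      have hww' : w = w' := fidx_inj v hww
      subst hww'
      rw [ih q₁, homSubsing v hconsec (arrowStep v hother e) e e']

lemma innerA (hconsec : ∀ i j : Fin n, (i : ℕ) + 1 = (j : ℕ) →
      Subsingleton (v i ⟶ v j) ∧ Subsingleton (v j ⟶ v i) ∧
        (Nonempty (v i ⟶ v j) ↔ IsEmpty (v j ⟶ v i)))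
    (hother : ∀ i j : Fin n, (i : ℕ) + 1 ≠ (j : ℕ) → (j : ℕ) + 1 ≠ (i : ℕ) →
      IsEmpty (v i ⟶ v j)) :
    ∀ {x y : V} (p : Path x y) (m : V),
      ((fidx v x < fidx v m ∧ fidx v m < fidx v y) ∨
        (fidx v y < fidx v m ∧ fidx v m < fidx v x)) → IsInnerVertex p m := by
  intro x y p
  induction p with
  | nil => intro m hm; exact absurd hm (by omega)
  | @cons w z p₁ e ih =>
    intro m hm
    have hlen : (p₁.cons e).length = p₁.length + 1 := rfl
    have la := lastArrow v hconsec hother p₁ e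
    by_cases hmw : fidx v m = fidx v w
    · have hmw' : m = w := fidx_inj v hmw
      subst hmw'
      refine ⟨p₁, e.toPath, ?_, Nat.one_ne_zero, rfl⟩
      intro h0
      have hxw : x = m := Quiver.Path.eq_of_length_zero p₁ h0
      subst hxw
      exact absurd hm (by omega)
    · have hstep : (fidx v x < fidx v m ∧ fidx v m < fidx v w) ∨
          (fidx v w < fidx v m ∧ fidx v m < fidx v x) := by
        rcases dirA v hconsec hother (p₁.cons e) (by simp) with ⟨h, _⟩ | ⟨h, _⟩
        · have t := la.1 (by omega); omega
        · have t := la.2 (by omega); omega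
      obtain ⟨a, b, ha, hb, hab⟩ := ih m hstep
      exact ⟨a, b.cons e, ha, by simp, by rw [← hab, Quiver.Path.comp_cons]⟩

end AuxAn

/-- For a quiver whose underlying graph is the Dynkin diagram `A_n` (vertices `v 0, …,
v (n-1)`, exactly one arrow between consecutive vertices, no other arrows), Condition (2)
holds for every linear order on the vertices. -/
theorem stmt_14 {V : Type*} [Quiver V] [LinearOrder V] {n : ℕ} (v : Fin n ≃ V)
    (hconsec : ∀ i j : Fin n, (i : ℕ) + 1 = (j : ℕ) →
      Subsingleton (v i ⟶ v j) ∧ Subsingleton (v j ⟶ v i) ∧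
        (Nonempty (v i ⟶ v j) ↔ IsEmpty (v j ⟶ v i)))
    (hother : ∀ i j : Fin n, (i : ℕ) + 1 ≠ (j : ℕ) → (j : ℕ) + 1 ≠ (i : ℕ) →
      IsEmpty (v i ⟶ v j)) :
    Cond2 V := by
  intro i j hij hq k k' p p' hp hp' hkj hk'j
  obtain ⟨q⟩ := hq
  have hqlen : q.length ≠ 0 := fun h0 => hij.ne' (Quiver.Path.eq_of_length_zero q h0)
  have np : p.length ≠ 0 := hp.1
  have np' : p'.length ≠ 0 := hp'.1
  have dq := dirA v hconsec hother q hqlen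
  have dp := dirA v hconsec hother p np
  have dp' := dirA v hconsec hother p' np'
  -- helper: if both paths same direction, the shorter target is an inner vertex
  have lenLe : ∀ {k₁ k₂ : V} (p₁ : Path i k₁) (p₂ : Path i k₂), IsRMD p₁ → IsRMD p₂ →
      ((fidx v k₁ = fidx v i + p₁.length ∧ fidx v k₂ = fidx v i + p₂.length) ∨
        (fidx v i = fidx v k₁ + p₁.length ∧ fidx v i = fidx v k₂ + p₂.length)) →
      p₁.length ≤ p₂.length → p₁.length = p₂.length := by
    intro k₁ k₂ p₁ p₂ h₁ h₂ hd hle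
    by_contra hne
    have n₁ := h₁.1
    have n₂ := h₂.1
    have hin : IsInnerVertex p₂ k₁ := by
      apply innerA v hconsec hother
      rcases hd with ⟨e₁, e₂⟩ | ⟨e₁, e₂⟩
      · left; omega
      · right; omega
    exact absurd (h₂.2.2 k₁ hin) (not_le.mpr h₁.2.1)
  have finish : ∀ (_ : (fidx v k = fidx v i + p.length ∧ fidx v k' = fidx v i + p'.length) ∨
      (fidx v i = fidx v k + p.length ∧ fidx v i = fidx v k' + p'.length)),
      k = k' ∧ HEq p p' := by
    intro hd
    have hlen : p.length = p'.length := by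
      rcases le_total p.length p'.length with h | h
      · exact lenLe p p' hp hp' hd h
      · exact (lenLe p' p hp' hp (by tauto) h).symm
    have hk : k = k' := by
      apply fidx_inj v
      rcases hd with ⟨e₁, e₂⟩ | ⟨e₁, e₂⟩ <;> omega
    subst hk
    exact ⟨rfl, heq_of_eq (uniqA v hconsec hother p p')⟩
  rcases dq with ⟨hqe, hqarr⟩ | ⟨hqe, hqarr⟩
  · -- q goes rightward (up in index) into i, so p, p' go rightward from i
    have hA : idxA v (fidx v i - 1) (fidx v i - 1 + 1) := hqarr _ (by omega) (by omega)
    have notleft : ∀ {k₀ : V} (p₀ : Path i k₀), p₀.length ≠ 0 →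
        fidx v i = fidx v k₀ + p₀.length →
        (∀ m, fidx v k₀ ≤ m → m < fidx v i → idxA v (m + 1) m) → False := by
      intro k₀ p₀ hl he harr
      have h2 := harr (fidx v i - 1) (by omega) (by omega)
      exact exclA v hconsec hA h2
    rcases dp with ⟨ep, _⟩ | ⟨ep, eparr⟩
    · rcases dp' with ⟨ep', _⟩ | ⟨ep', ep'arr⟩
      · exact finish (Or.inl ⟨ep, ep'⟩)
      · exact absurd (notleft p' np' ep' ep'arr) (by simp)
    · exact absurd (notleft p np ep eparr) (by simp)
  · -- q goes leftward into i, so p, p' go leftward from i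
    have hA : idxA v (fidx v i + 1) (fidx v i) := hqarr _ (le_refl _) (by omega)
    have notright : ∀ {k₀ : V} (p₀ : Path i k₀), p₀.length ≠ 0 →
        fidx v k₀ = fidx v i + p₀.length →
        (∀ m, fidx v i ≤ m → m < fidx v k₀ → idxA v m (m + 1)) → False := by
      intro k₀ p₀ hl he harr
      have h1 := harr (fidx v i) (le_refl _) (by omega)
      exact exclA v hconsec h1 hA
    rcases dp with ⟨ep, eparr⟩ | ⟨ep, _⟩
    · exact absurd (notright p np ep eparr) (by simp)
    · rcases dp' with ⟨ep', ep'arr⟩ | ⟨ep', _⟩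
      · exact absurd (notright p' np' ep' ep'arr) (by simp)
      · exact finish (Or.inr ⟨ep, ep'⟩)
end

section
/- Let Q be a quiver whose underlying graph is the Dynkin diagram A_n, i.e. its vertices are v_1, …, v_n, for each 1 ≤ i < n there is exactly one arrow between v_i and v_{i+1} (oriented in one of the two possible directions), and there are no other arrows. Then for any two paths p and p' in Q with the same source, either p is a right subpath of p' (i.e. p' = u ∘ p for some path u), or p' is a right subpath of p, or p and p' are nontrivial and begin with different arrows. Dually, for any two paths p and p' with the same target, either one is a left subpath of the other (p' = p ∘ u or p = p' ∘ u for some path u), or p and p' are nontrivial and end with different arrows. -/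
open Quiver

section
variable {V : Type*} [Quiver V] {n : ℕ} (v : Fin n ≃ V)
    (hconsec : ∀ i j : Fin n, (i : ℕ) + 1 = (j : ℕ) →
      Subsingleton (v i ⟶ v j) ∧ Subsingleton (v j ⟶ v i) ∧
        (Nonempty (v i ⟶ v j) ↔ IsEmpty (v j ⟶ v i)))
    (hother : ∀ i j : Fin n, (i : ℕ) + 1 ≠ (j : ℕ) → (j : ℕ) + 1 ≠ (i : ℕ) →
      IsEmpty (v i ⟶ v j))

include hconsec hother in
lemma an_uniqueOut {w x y y' : V} (α : w ⟶ x) (β : x ⟶ y) (β' : x ⟶ y') :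
    y = y' ∧ HEq β β' := by
  obtain ⟨m, rfl⟩ := v.surjective w
  obtain ⟨k, rfl⟩ := v.surjective x
  obtain ⟨j, rfl⟩ := v.surjective y
  obtain ⟨j', rfl⟩ := v.surjective y'
  have consec : ∀ (i i' : Fin n), (v i ⟶ v i') → (i:ℕ)+1 = i' ∨ (i':ℕ)+1 = i := by
    intro i i' f
    by_contra h
    push_neg at h
    exact (hother i i' h.1 h.2).false f
  have hmk := consec m k α
  have hkj := consec k j β
  have hkj' := consec k j' β'
  have hnot : IsEmpty (v k ⟶ v m) := by
    rcases hmk with h | h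
    · exact ((hconsec m k h).2.2).mp ⟨α⟩
    · rcases isEmpty_or_nonempty (v k ⟶ v m) with he | hne
      · exact he
      · exact (((((hconsec k m h).2.2).mp hne).false α)).elim
  have hjm : (j:ℕ) ≠ (m:ℕ) := by
    intro h
    exact hnot.false ((Fin.ext h : j = m) ▸ β)
  have hj'm : (j':ℕ) ≠ (m:ℕ) := by
    intro h
    exact hnot.false ((Fin.ext h : j' = m) ▸ β')
  have hjj : j = j' := Fin.ext (by omega)
  subst hjj
  refine ⟨rfl, heq_of_eq ?_⟩
  have hsub : Subsingleton (v k ⟶ v j) := by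
    rcases hkj with h | h
    · exact (hconsec k j h).1
    · exact (hconsec j k h).2.1
  exact hsub.elim β β'

include hconsec hother in
lemma an_uniqueIn {w x y y' : V} (α : x ⟶ w) (β : y ⟶ x) (β' : y' ⟶ x) :
    y = y' ∧ HEq β β' := by
  obtain ⟨m, rfl⟩ := v.surjective w
  obtain ⟨k, rfl⟩ := v.surjective x
  obtain ⟨j, rfl⟩ := v.surjective y
  obtain ⟨j', rfl⟩ := v.surjective y'
  have consec : ∀ (i i' : Fin n), (v i ⟶ v i') → (i:ℕ)+1 = i' ∨ (i':ℕ)+1 = i := by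
    intro i i' f
    by_contra h
    push_neg at h
    exact (hother i i' h.1 h.2).false f
  have hmk := consec k m α
  have hkj := consec j k β
  have hkj' := consec j' k β'
  have hnot : IsEmpty (v m ⟶ v k) := by
    rcases hmk with h | h
    · exact ((hconsec k m h).2.2).mp ⟨α⟩
    · rcases isEmpty_or_nonempty (v m ⟶ v k) with he | hne
      · exact he
      · exact (((((hconsec m k h).2.2).mp hne).false α)).elim
  have hjm : (j:ℕ) ≠ (m:ℕ) := by
    intro h
    exact hnot.false ((Fin.ext h : j = m) ▸ β)
  have hj'm : (j':ℕ) ≠ (m:ℕ) := by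
    intro h
    exact hnot.false ((Fin.ext h : j' = m) ▸ β')
  have hjj : j = j' := Fin.ext (by omega)
  subst hjj
  refine ⟨rfl, heq_of_eq ?_⟩
  have hsub : Subsingleton (v j ⟶ v k) := by
    rcases hkj with h | h
    · exact (hconsec j k h).1
    · exact (hconsec k j h).2.1
  exact hsub.elim β β'


include hconsec hother in
lemma an_part1 : ∀ (N : ℕ) {a b b' : V} (p : Path a b) (p' : Path a b'),
    p.length ≤ N →
      ((∃ u : Path b b', p.comp u = p') ∨
      (∃ u : Path b' b, p'.comp u = p) ∨
      (∃ (x x' : V) (α : a ⟶ x) (α' : a ⟶ x')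
          (u : Path x b) (u' : Path x' b'),
        p = (α.toPath).comp u ∧ p' = (α'.toPath).comp u' ∧
          ¬ (x = x' ∧ HEq α α'))) := by
  intro N
  induction N with
  | zero =>
    intro a b b' p p' hp
    obtain rfl := p.eq_of_length_zero (Nat.le_zero.mp hp)
    obtain rfl := p.eq_nil_of_length_zero (Nat.le_zero.mp hp)
    exact Or.inl ⟨p', p'.nil_comp⟩
  | succ N ih =>
    intro a b b' p p' hp
    rcases Nat.eq_zero_or_pos p.length with h0 | h0
    · obtain rfl := p.eq_of_length_zero h0
      obtain rfl := p.eq_nil_of_length_zero h0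
      exact Or.inl ⟨p', p'.nil_comp⟩
    rcases Nat.eq_zero_or_pos p'.length with h0' | h0'
    · obtain rfl := p'.eq_of_length_zero h0'
      obtain rfl := p'.eq_nil_of_length_zero h0'
      exact Or.inr (Or.inl ⟨p, p.nil_comp⟩)
    obtain ⟨x, α, u, hu, rfl⟩ :=
      p.eq_toPath_comp_of_length_eq_succ (n := p.length - 1) (by omega)
    obtain ⟨x', α', u', hu', rfl⟩ :=
      p'.eq_toPath_comp_of_length_eq_succ (n := p'.length - 1) (by omega)
    by_cases hsame : x = x' ∧ HEq α α'
    · obtain ⟨rfl, he⟩ := hsame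
      obtain rfl := eq_of_heq he
      have hlen : u.length ≤ N := by
        have h2 := Quiver.Path.length_comp α.toPath (q := u)
        simp [Quiver.Hom.toPath] at h2
        omega
      rcases ih u u' hlen with ⟨w, hw⟩ | ⟨w, hw⟩ | ⟨y, y', β, β', s, s', hs, hs', hdiff⟩
      · exact Or.inl ⟨w, by rw [Quiver.Path.comp_assoc, hw]⟩
      · exact Or.inr (Or.inl ⟨w, by rw [Quiver.Path.comp_assoc, hw]⟩)
      · exact absurd (an_uniqueOut v hconsec hother α β β')
          (fun hcon => hdiff ⟨hcon.1, hcon.2⟩)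
    · exact Or.inr (Or.inr ⟨x, x', α, α', u, u', rfl, rfl, hsame⟩)

include hconsec hother in
lemma an_part2 : ∀ {a b : V} (p : Path a b) {a' : V} (p' : Path a' b),
      ((∃ u : Path a' a, u.comp p = p') ∨
      (∃ u : Path a a', u.comp p' = p) ∨
      (∃ (x x' : V) (α : x ⟶ b) (α' : x' ⟶ b)
          (u : Path a x) (u' : Path a' x'),
        p = u.comp α.toPath ∧ p' = u'.comp α'.toPath ∧
          ¬ (x = x' ∧ HEq α α'))) := by
  intro a b p
  induction p with
  | nil =>
    intro a' p'
    exact Or.inl ⟨p', rfl⟩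
  | @cons x b q e ih =>
    intro a' p'
    cases p' with
    | nil => exact Or.inr (Or.inl ⟨q.cons e, rfl⟩)
    | @cons x' _bb q' e' =>
      by_cases hsame : x = x' ∧ HEq e e'
      · obtain ⟨rfl, he⟩ := hsame
        obtain rfl := eq_of_heq he
        rcases ih q' with ⟨w, hw⟩ | ⟨w, hw⟩ | ⟨y, y', β, β', s, s', hs, hs', hdiff⟩
        · exact Or.inl ⟨w, by show (w.comp q).cons e = q'.cons e; rw [hw]⟩
        · exact Or.inr (Or.inl ⟨w, by show (w.comp q').cons e = q.cons e; rw [hw]⟩)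
        · exact absurd (an_uniqueIn v hconsec hother e β β')
            (fun hcon => hdiff ⟨hcon.1, hcon.2⟩)
      · exact Or.inr (Or.inr ⟨x, x', e, e', q, q', rfl, rfl, hsame⟩)

end

/-- For a quiver whose underlying graph is the Dynkin diagram `A_n` (vertices `v 0, …,
v (n-1)`, exactly one arrow between consecutive vertices, no other arrows):
for any two paths with the same source, either one is a right subpath of the other or
they are nontrivial and begin with different arrows; dually, for any two paths with the
same target, either one is a left subpath of the other or they are nontrivial and end
with different arrows. -/
theorem stmt_15 {V : Type*} [Quiver V] {n : ℕ} (v : Fin n ≃ V)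
    (hconsec : ∀ i j : Fin n, (i : ℕ) + 1 = (j : ℕ) →
      Subsingleton (v i ⟶ v j) ∧ Subsingleton (v j ⟶ v i) ∧
        (Nonempty (v i ⟶ v j) ↔ IsEmpty (v j ⟶ v i)))
    (hother : ∀ i j : Fin n, (i : ℕ) + 1 ≠ (j : ℕ) → (j : ℕ) + 1 ≠ (i : ℕ) →
      IsEmpty (v i ⟶ v j)) :
    (∀ (a b b' : V) (p : Path a b) (p' : Path a b'),
      (∃ u : Path b b', p.comp u = p') ∨
      (∃ u : Path b' b, p'.comp u = p) ∨
      (∃ (x x' : V) (α : a ⟶ x) (α' : a ⟶ x')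
          (u : Path x b) (u' : Path x' b'),
        p = (α.toPath).comp u ∧ p' = (α'.toPath).comp u' ∧
          ¬ (x = x' ∧ HEq α α'))) ∧
    (∀ (a a' b : V) (p : Path a b) (p' : Path a' b),
      (∃ u : Path a' a, u.comp p = p') ∨
      (∃ u : Path a a', u.comp p' = p) ∨
      (∃ (x x' : V) (α : x ⟶ b) (α' : x' ⟶ b)
          (u : Path a x) (u' : Path a' x'),
        p = u.comp α.toPath ∧ p' = u'.comp α'.toPath ∧
          ¬ (x = x' ∧ HEq α α'))) :=
  ⟨fun _ _ _ p p' => an_part1 v hconsec hother p.length p p' le_rfl,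
   fun _ _ _ p p' => an_part2 v hconsec hother p p'⟩
end
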